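/- arXiv:1908.09912 — 8 statements merged into one kernel-verified Lean document; each statement's English description precedes it below -/
import Mathlib

section
/- Let L be a semimodular join-semilattice and let c₀ ⋖ c₁ ⋖ … ⋖ cₙ and d₀ ⋖ d₁ ⋖ … ⋖ d_m be two maximal chains in L with the same least element c₀ = d₀ and same greatest element cₙ = d_m. Then m = n. -/
section aux

variable {L : Type*} [PartialOrder L]

/-- cons for chains -/
private def consChain (a : L) (f : ℕ → L) : ℕ → L
  | 0 => a
  | j + 1 => f j

private lemma consChain_cov {a : L} {f : ℕ → L} {k : ℕ}
    (ha : a ⋖ f 0) (hf : ∀ i < k, f i ⋖ f (i + 1)) :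
    ∀ i < k + 1, consChain a f i ⋖ consChain a f (i + 1) := by
  intro i hi
  cases i with
  | zero => exact ha
  | succ j => exact hf j (by omega)

private lemma chainLe {n : ℕ} {c : ℕ → L}
    (hc : ∀ i < n, c i ≤ c (i + 1)) :
    ∀ i j, i ≤ j → j ≤ n → c i ≤ c j := by
  intro i j hij hjn
  induction j with
  | zero => simp_all
  | succ j ih =>
    rcases Nat.eq_or_lt_of_le hij with h | h
    · rw [h]
    · exact (ih (by omega) (by omega)).trans (hc j (by omega))

private lemma chainLt {n : ℕ} {c : ℕ → L}
    (hc : ∀ i < n, c i ⋖ c (i + 1)) (hn : 0 < n) : c 0 < c n :=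
  lt_of_lt_of_le (hc 0 hn).lt
    (chainLe (fun i hi => (hc i hi).le) 1 n hn le_rfl)

/-- extract a covering chain from a weakly covering chain -/
private lemma extract :
    ∀ (n : ℕ) (g : ℕ → L), (∀ i < n, g i ⩿ g (i + 1)) →
      ∃ (k : ℕ) (f : ℕ → L), (∀ i < k, f i ⋖ f (i + 1)) ∧ f 0 = g 0 ∧ f k = g n := by
  intro n
  induction n with
  | zero => exact fun g _ => ⟨0, g, by simp, rfl, rfl⟩
  | succ n ih =>
    intro g hg
    obtain ⟨k, f, hf, hf0, hfk⟩ := ih (fun i => g (i + 1)) (fun i hi => hg (i + 1) (by omega))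
    rcases wcovBy_iff_covBy_or_eq.mp (hg 0 (by omega)) with h | h
    · refine ⟨k + 1, consChain (g 0) f, consChain_cov (hf0 ▸ h) hf, rfl, hfk⟩
    · exact ⟨k, f, hf, hf0.trans h.symm, hfk⟩

end aux

theorem stmt_5 {L : Type*} [SemilatticeSup L]
    (hsm : ∀ a b c : L, a ⋖ b → a ⊔ c ⩿ b ⊔ c)
    (n m : ℕ) (c d : ℕ → L)
    (hc : ∀ i < n, c i ⋖ c (i + 1))
    (hd : ∀ j < m, d j ⋖ d (j + 1))
    (hbot : c 0 = d 0) (htop : c n = d m) :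
    m = n := by
  induction n generalizing m c d with
  | zero =>
    by_contra h
    have : d 0 < d m := chainLt hd (by omega)
    rw [← hbot, ← htop] at this
    exact lt_irrefl _ this
  | succ n ih =>
    -- m ≥ 1
    rcases Nat.eq_zero_or_pos m with hm0 | hm
    · exfalso
      have : c 0 < c (n + 1) := chainLt hc (by omega)
      rw [htop, hm0, ← hbot] at this
      exact lt_irrefl _ this
    obtain ⟨m', rfl⟩ : ∃ m', m = m' + 1 := ⟨m - 1, by omega⟩
    by_cases h1 : c 1 = d 1
    · have := ih m' (fun i => c (i + 1)) (fun j => d (j + 1))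
        (fun i hi => hc (i + 1) (by omega)) (fun j hj => hd (j + 1) (by omega)) h1 htop
      omega
    · -- c 1 ≠ d 1
      have hc0 : c 0 ⋖ c 1 := hc 0 (by omega)
      have hd0 : c 0 ⋖ d 1 := by rw [hbot]; exact hd 0 (by omega)
      set e : L := c 1 ⊔ d 1 with he
      have hc1e : c 1 ⋖ e := by
        have hw : c 1 ⩿ e := by
          have := hsm (c 0) (d 1) (c 1) hd0
          rwa [sup_eq_right.mpr hc0.le, sup_comm] at this
        refine hw.covBy_of_ne fun hne => ?_
        have hd1c1 : d 1 ≤ c 1 := hne ▸ le_sup_right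
        exact hc0.2 hd0.lt (lt_of_le_of_ne hd1c1 fun h => h1 h.symm)
      have hd1e : d 1 ⋖ e := by
        have hw : d 1 ⩿ e := by
          have := hsm (c 0) (c 1) (d 1) hc0
          rwa [sup_eq_right.mpr hd0.le] at this
        refine hw.covBy_of_ne fun hne => ?_
        have hc1d1 : c 1 ≤ d 1 := hne ▸ le_sup_left
        exact hd0.2 hc0.lt (lt_of_le_of_ne hc1d1 h1)
      -- e ≤ top
      have hc1top : c 1 ≤ c (n + 1) :=
        chainLe (fun i hi => (hc i hi).le) 1 (n + 1) (by omega) le_rfl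
      have hd1top : d 1 ≤ c (n + 1) := by
        rw [htop]
        exact chainLe (fun j hj => (hd j hj).le) 1 (m' + 1) (by omega) le_rfl
      have hetop : e ≤ c (n + 1) := sup_le hc1top hd1top
      -- wcovby chain from e to top
      obtain ⟨k, f, hf, hf0, hfk⟩ := extract n (fun i => e ⊔ c (i + 1)) (by
        intro i hi
        have := hsm (c (i + 1)) (c (i + 2)) e (hc (i + 1) (by omega))
        show e ⊔ c (i + 1) ⩿ e ⊔ c (i + 1 + 1)
        rwa [sup_comm e, sup_comm e])
      have hf0e : f 0 = e := by rw [hf0]; exact sup_eq_left.mpr le_sup_left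
      have hfktop : f k = c (n + 1) := by
        rw [hfk]; exact sup_eq_right.mpr hetop
      -- chain from c 1 to top of length k + 1
      have hkn : k + 1 = n := by
        refine ih (k + 1) (fun i => c (i + 1)) (consChain (c 1) f)
          (fun i hi => hc (i + 1) (by omega))
          (consChain_cov (hf0e ▸ hc1e) hf) rfl ?_
        exact hfktop.symm
      -- chain from d 1 to top of length k + 1 = n
      have : m' = n := by
        refine ih m' ?_ (fun j => d (j + 1)) ?_
          (fun j hj => hd (j + 1) (by omega)) ?_ ?_
        · exact fun i => consChain (d 1) f (if i ≤ k + 1 then i else 0)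
        · intro i hi
          have hi' : i < k + 1 := by omega
          simp only [if_pos (by omega : i ≤ k + 1), if_pos (by omega : i + 1 ≤ k + 1)]
          exact consChain_cov (hf0e ▸ hd1e) hf i hi'
        · simp [consChain]
        · simp only [if_pos (by omega : n ≤ k + 1)]
          rw [← hkn]
          exact (show consChain (d 1) f (k + 1) = f k from rfl).trans (hfktop.trans htop)
      omega
end

section
/- Let L be a semimodular join-semilattice and let 0 = c₀ ⋖ c₁ ⋖ … ⋖ cₙ = 1 and 0 = d₀ ⋖ d₁ ⋖ … ⋖ dₙ = 1 be two maximal chains with common endpoints. Then there exists a permutation π of {1,…,n} such that for every i, the prime interval [c_{i-1}, c_i] is up-and-down projective to [d_{π(i)-1}, d_{π(i)}], i.e., there exist x ⋖ y in L with [c_{i-1},c_i] ↗ [x,y] and [d_{π(i)-1},d_{π(i)}] ↗ [x,y]. -/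
/-- `[a,b] ↗ [x,y]` for prime intervals in a join-semilattice. -/
def UpProj {L : Type*} [SemilatticeSup L] (a b x y : L) : Prop :=
  x ≠ y ∧ a ⊔ x = x ∧ b ⊔ x = y

/-- Up-and-down projectivity of prime intervals. -/
def UpDownProj {L : Type*} [SemilatticeSup L] (a b c d : L) : Prop :=
  ∃ x y : L, x ⋖ y ∧ UpProj a b x y ∧ UpProj c d x y

section JH

variable {L : Type*} [SemilatticeSup L]

private lemma chain_mono {n : ℕ} {c : ℕ → L} (hc : ∀ i < n, c i ⋖ c (i + 1)) :
    ∀ i j, i ≤ j → j ≤ n → c i ≤ c j := by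
  intro i j hij hjn
  induction j with
  | zero =>
    have : i = 0 := Nat.le_zero.mp hij
    simp [this]
  | succ k ih =>
    rcases Nat.eq_or_lt_of_le hij with h | h
    · exact h ▸ le_refl _
    · exact le_trans (ih (Nat.lt_succ_iff.mp h) (le_trans (Nat.le_succ k) hjn))
        (hc k (lt_of_lt_of_le (Nat.lt_succ_self k) hjn)).le

private lemma jh_uniq {n : ℕ} {c d : ℕ → L}
    (hdmono : ∀ a b : ℕ, a ≤ b → b ≤ n → d a ≤ d b) {i j j' : ℕ} (hj : j < n) (hj' : j' < n)
    (h1 : c (i + 1) ≤ c i ⊔ d (j + 1)) (h2 : ¬ c (i + 1) ≤ c i ⊔ d j)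
    (h1' : c (i + 1) ≤ c i ⊔ d (j' + 1)) (h2' : ¬ c (i + 1) ≤ c i ⊔ d j') : j = j' := by
  by_contra hne
  rcases lt_or_gt_of_ne hne with h | h
  · exact h2' (h1.trans (sup_le_sup_left (hdmono (j + 1) j' h hj'.le) _))
  · exact h2 (h1'.trans (sup_le_sup_left (hdmono (j' + 1) j h hj.le) _))

private lemma jh_aux (hsm : ∀ a b c : L, a ⋖ b → a ⊔ c ⩿ b ⊔ c)
    {n : ℕ} {c d : ℕ → L} (hc : ∀ i < n, c i ⋖ c (i + 1)) (hd : ∀ j < n, d j ⋖ d (j + 1))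
    (h0 : d 0 ≤ c 0) (htop : c n ≤ d n) {i : ℕ} (hi : i < n) :
    ∃ j, j < n ∧ (c i ⊔ d j) ⋖ (c i ⊔ d (j + 1)) ∧
      c (i + 1) ≤ c i ⊔ d (j + 1) ∧ ¬ c (i + 1) ≤ c i ⊔ d j ∧
      d (j + 1) ≤ d j ⊔ c (i + 1) ∧ ¬ d (j + 1) ≤ d j ⊔ c i := by
  classical
  have hcm := chain_mono hc
  have hn1 : 1 ≤ n := Nat.one_le_of_lt (Nat.lt_of_le_of_lt (Nat.zero_le i) hi)
  have hw : c (i + 1) ≤ c i ⊔ d ((n - 1) + 1) := by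
    have he : (n - 1) + 1 = n := by omega
    rw [he]
    exact le_sup_of_le_right ((hcm (i + 1) n hi le_rfl).trans htop)
  have hex : ∃ j, c (i + 1) ≤ c i ⊔ d (j + 1) := ⟨n - 1, hw⟩
  set j := Nat.find hex with hjdef
  have h1 : c (i + 1) ≤ c i ⊔ d (j + 1) := Nat.find_spec hex
  have hjn : j < n := by
    have := Nat.find_min' hex hw
    omega
  have h2 : ¬ c (i + 1) ≤ c i ⊔ d j := by
    rcases Nat.eq_zero_or_pos j with hj0 | hjpos
    · rw [hj0]
      have hd0 : c i ⊔ d 0 = c i :=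
        sup_eq_left.mpr (h0.trans (hcm 0 i (Nat.zero_le i) hi.le))
      rw [hd0]
      exact (hc i hi).lt.not_ge
    · have hmin := Nat.find_min hex (show j - 1 < j by omega)
      have hje : (j - 1) + 1 = j := by omega
      rwa [hje] at hmin
  have hwc : (c i ⊔ d j) ⩿ (c i ⊔ d (j + 1)) := by
    have := hsm (d j) (d (j + 1)) (c i) (hd j hjn)
    rwa [sup_comm (d j), sup_comm (d (j + 1))] at this
  have hne : c i ⊔ d j ≠ c i ⊔ d (j + 1) := fun h => h2 (by rw [h]; exact h1)
  have hcov : (c i ⊔ d j) ⋖ (c i ⊔ d (j + 1)) :=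
    hwc.covBy_of_lt (lt_of_le_of_ne hwc.le hne)
  have hz1 : c i ⊔ d j ≤ d j ⊔ c (i + 1) :=
    sup_le (le_sup_of_le_right (hc i hi).le) le_sup_left
  have hz2 : d j ⊔ c (i + 1) ≤ c i ⊔ d (j + 1) :=
    sup_le (le_sup_of_le_right (hd j hjn).le) h1
  have h3 : d (j + 1) ≤ d j ⊔ c (i + 1) := by
    rcases hcov.eq_or_eq hz1 hz2 with h | h
    · exact absurd (by rw [← h]; exact le_sup_right) h2
    · rw [h]; exact le_sup_right
  have h4 : ¬ d (j + 1) ≤ d j ⊔ c i := by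
    intro hle
    apply h2
    have : c i ⊔ d (j + 1) ≤ c i ⊔ d j :=
      sup_le le_sup_left (hle.trans (sup_le le_sup_right le_sup_left))
    exact h1.trans this
  exact ⟨j, hjn, hcov, h1, h2, h3, h4⟩

end JH

theorem stmt_6 {L : Type*} [SemilatticeSup L] [OrderBot L] [OrderTop L]
    (hsm : ∀ a b c : L, a ⋖ b → a ⊔ c ⩿ b ⊔ c)
    (n : ℕ) (c d : ℕ → L)
    (hc : ∀ i < n, c i ⋖ c (i + 1)) (hd : ∀ j < n, d j ⋖ d (j + 1))
    (hc0 : c 0 = ⊥) (hcn : c n = ⊤) (hd0 : d 0 = ⊥) (hdn : d n = ⊤) :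
    ∃ π : Equiv.Perm (Fin n), ∀ i : Fin n,
      UpDownProj (c i) (c (i + 1)) (d (π i)) (d ((π i : ℕ) + 1)) := by
  classical
  have h0cd : d 0 ≤ c 0 := by rw [hc0, hd0]
  have h0dc : c 0 ≤ d 0 := by rw [hc0, hd0]
  have htcd : c n ≤ d n := by rw [hcn, hdn]
  have htdc : d n ≤ c n := by rw [hcn, hdn]
  have hcm := chain_mono hc
  have hdm := chain_mono hd
  have A : ∀ i : Fin n, ∃ j, j < n ∧ (c i ⊔ d j) ⋖ (c i ⊔ d (j + 1)) ∧
      c (i + 1) ≤ c i ⊔ d (j + 1) ∧ ¬ c (i + 1) ≤ c i ⊔ d j ∧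
      d (j + 1) ≤ d j ⊔ c (i + 1) ∧ ¬ d (j + 1) ≤ d j ⊔ c i :=
    fun i => jh_aux hsm hc hd h0cd htcd i.2
  have B : ∀ jj : Fin n, ∃ i, i < n ∧ (d jj ⊔ c i) ⋖ (d jj ⊔ c (i + 1)) ∧
      d (jj + 1) ≤ d jj ⊔ c (i + 1) ∧ ¬ d (jj + 1) ≤ d jj ⊔ c i ∧
      c (i + 1) ≤ c i ⊔ d (jj + 1) ∧ ¬ c (i + 1) ≤ c i ⊔ d jj :=
    fun jj => jh_aux hsm hd hc h0dc htdc jj.2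
  choose jf hjf1 hjf2 hjf3 hjf4 hjf5 hjf6 using A
  choose gi hg1 hg2 hg3 hg4 hg5 hg6 using B
  let F : Fin n → Fin n := fun i => ⟨jf i, hjf1 i⟩
  let G : Fin n → Fin n := fun jj => ⟨gi jj, hg1 jj⟩
  have hGF : ∀ i : Fin n, G (F i) = i := by
    intro i
    apply Fin.ext
    show gi (F i) = (i : ℕ)
    exact jh_uniq hcm (hg1 (F i)) i.2 (hg3 (F i)) (hg4 (F i)) (hjf5 i) (hjf6 i)
  have hFG : ∀ jj : Fin n, F (G jj) = jj := by
    intro jj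
    apply Fin.ext
    show jf (G jj) = (jj : ℕ)
    exact jh_uniq hdm (hjf1 (G jj)) jj.2 (hjf3 (G jj)) (hjf4 (G jj)) (hg5 jj) (hg6 jj)
  refine ⟨⟨F, G, hGF, hFG⟩, fun i => ?_⟩
  show UpDownProj (c i) (c (i + 1)) (d (jf i)) (d (jf i + 1))
  have hcov := hjf2 i
  have hdj : d (jf i) ≤ d (jf i + 1) := (hd (jf i) (hjf1 i)).le
  refine ⟨c i ⊔ d (jf i), c i ⊔ d (jf i + 1), hcov, ⟨hcov.ne, ?_, ?_⟩, ⟨hcov.ne, ?_, ?_⟩⟩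
  · rw [← sup_assoc, sup_idem]
  · -- c (i+1) ⊔ (c i ⊔ d (jf i)) = c i ⊔ d (jf i + 1)
    have hle : c (i + 1) ⊔ (c i ⊔ d (jf i)) ≤ c i ⊔ d (jf i + 1) :=
      sup_le (hjf3 i) hcov.le
    rcases hcov.eq_or_eq le_sup_right hle with h | h
    · exact absurd (by rw [← h]; exact le_sup_left) (hjf4 i)
    · exact h
  · -- d (jf i) ⊔ (c i ⊔ d (jf i)) = c i ⊔ d (jf i)
    rw [sup_comm (c i), ← sup_assoc, sup_idem, sup_comm]
  · -- d (jf i + 1) ⊔ (c i ⊔ d (jf i)) = c i ⊔ d (jf i + 1)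
    apply le_antisymm
    · exact sup_le le_sup_right (sup_le le_sup_left (hdj.trans le_sup_right))
    · exact sup_le (le_sup_of_le_right le_sup_left) le_sup_left
end

section
/- Let L be a semimodular join-semilattice with maximal chains 0 = c₀ ⋖ … ⋖ cₙ = 1 and 0 = d₀ ⋖ … ⋖ dₙ = 1. Then there is a unique permutation π of {1,…,n} such that [c_{i-1},c_i] is up-and-down projective to [d_{π(i)-1},d_{π(i)}] for all i. Moreover π is maximal among matchings: if [c_{i-1},c_i] is up-and-down projective to [d_{j-1},d_j] for some j, then j ≤ π(i). -/
theorem stmt_7 {L : Type*} [SemilatticeSup L] [OrderBot L] [OrderTop L]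
    (hsm : ∀ a b c : L, a ⋖ b → a ⊔ c ⩿ b ⊔ c)
    (n : ℕ) (c d : ℕ → L)
    (hc : ∀ i < n, c i ⋖ c (i + 1)) (hd : ∀ j < n, d j ⋖ d (j + 1))
    (hc0 : c 0 = ⊥) (hcn : c n = ⊤) (hd0 : d 0 = ⊥) (hdn : d n = ⊤) :
    ∃ π : Equiv.Perm (Fin n),
      (∀ i : Fin n, UpDownProj (c i) (c (i + 1)) (d (π i)) (d ((π i : ℕ) + 1))) ∧
      (∀ π' : Equiv.Perm (Fin n),
        (∀ i : Fin n, UpDownProj (c i) (c (i + 1)) (d (π' i)) (d ((π' i : ℕ) + 1))) →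
        π' = π) ∧
      (∀ i j : Fin n, UpDownProj (c i) (c (i + 1)) (d j) (d ((j : ℕ) + 1)) →
        j ≤ π i) := by
  classical
  -- monotonicity of the chains
  have cmono : ∀ i j : ℕ, i ≤ j → j ≤ n → c i ≤ c j := by
    intro i j hij hjn
    induction j with
    | zero => simp [Nat.le_zero.mp hij]
    | succ j ih =>
      rcases Nat.lt_or_ge i (j + 1) with h | h
      · exact le_trans (ih (Nat.lt_succ_iff.mp h) (by omega)) (hc j (by omega)).le
      · have : i = j + 1 := le_antisymm hij h
        simp [this]
  have dmono : ∀ i j : ℕ, i ≤ j → j ≤ n → d i ≤ d j := by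
    intro i j hij hjn
    induction j with
    | zero => simp [Nat.le_zero.mp hij]
    | succ j ih =>
      rcases Nat.lt_or_ge i (j + 1) with h | h
      · exact le_trans (ih (Nat.lt_succ_iff.mp h) (by omega)) (hd j (by omega)).le
      · have : i = j + 1 := le_antisymm hij h
        simp [this]
  have hex : ∀ i : Fin n, ∃ j, c (↑i + 1) ≤ c ↑i ⊔ d (j + 1) := by
    intro i
    refine ⟨n - 1, ?_⟩
    have hn : n - 1 + 1 = n := Nat.succ_pred_eq_of_pos i.pos
    rw [hn, hdn]
    simp
  let p : Fin n → ℕ := fun i => Nat.find (hex i)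
  have hspec : ∀ i : Fin n, c (↑i + 1) ≤ c ↑i ⊔ d (p i + 1) := fun i => Nat.find_spec (hex i)
  have hmin : ∀ i : Fin n, ∀ k, k < p i → ¬ c (↑i + 1) ≤ c ↑i ⊔ d (k + 1) :=
    fun i k hk => Nat.find_min (hex i) hk
  have hplt : ∀ i, p i < n := by
    intro i
    have h1 : p i ≤ n - 1 := Nat.find_le (by
      show c (↑i + 1) ≤ c ↑i ⊔ d (n - 1 + 1)
      have hn : n - 1 + 1 = n := Nat.succ_pred_eq_of_pos i.pos
      rw [hn, hdn]; simp)
    have := i.pos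
    omega
  have hnot : ∀ i : Fin n, ¬ c (↑i + 1) ≤ c ↑i ⊔ d (p i) := by
    intro i hle
    rcases Nat.eq_zero_or_pos (p i) with h0 | hpos
    · rw [h0, hd0, sup_bot_eq] at hle
      exact absurd hle (hc ↑i i.isLt).lt.not_ge
    · obtain ⟨k, hk⟩ : ∃ k, p i = k + 1 := ⟨p i - 1, by omega⟩
      rw [hk] at hle
      exact hmin i k (by omega) hle
  -- key covering
  have hkey : ∀ i : Fin n, (c ↑i ⊔ d (p i)) ⋖ (c ↑i ⊔ d (p i + 1)) := by
    intro i
    have hw : c ↑i ⊔ d (p i) ⩿ c ↑i ⊔ d (p i + 1) := by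
      have := hsm (d (p i)) (d (p i + 1)) (c ↑i) (hd (p i) (hplt i))
      rwa [sup_comm (d (p i)), sup_comm (d (p i + 1))] at this
    have hne : c ↑i ⊔ d (p i) ≠ c ↑i ⊔ d (p i + 1) := by
      intro h
      exact hnot i (h ▸ hspec i)
    exact hw.covBy_of_lt (lt_of_le_of_ne hw.le hne)
  -- from x ⋖ y: if x < z ≤ y then z = y
  have hcov_eq : ∀ x y z : L, x ⋖ y → x < z → z ≤ y → z = y := by
    intro x y z hxy hxz hzy
    rcases lt_or_eq_of_le hzy with h | h
    · exact absurd h (hxy.2 hxz)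
    · exact h
  -- the second step of the "square": c(i+1) ⊔ (c i ⊔ d (p i)) = c i ⊔ d (p i + 1)
  have hsquare : ∀ i : Fin n, c (↑i + 1) ⊔ (c ↑i ⊔ d (p i)) = c ↑i ⊔ d (p i + 1) := by
    intro i
    have hlt : c ↑i ⊔ d (p i) < c (↑i + 1) ⊔ (c ↑i ⊔ d (p i)) := by
      rcases lt_or_eq_of_le (le_sup_right :
          c ↑i ⊔ d (p i) ≤ c (↑i + 1) ⊔ (c ↑i ⊔ d (p i))) with h | h
      · exact h
      · exact absurd (h ▸ le_sup_left) (hnot i)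
    have hle : c (↑i + 1) ⊔ (c ↑i ⊔ d (p i)) ≤ c ↑i ⊔ d (p i + 1) :=
      sup_le (hspec i) (hkey i).le
    exact hcov_eq _ _ _ (hkey i) hlt hle
  have hupdown : ∀ i : Fin n,
      UpDownProj (c ↑i) (c (↑i + 1)) (d (p i)) (d (p i + 1)) := by
    intro i
    refine ⟨c ↑i ⊔ d (p i), c ↑i ⊔ d (p i + 1), hkey i,
      ⟨(hkey i).ne, ?_, hsquare i⟩, ⟨(hkey i).ne, ?_, ?_⟩⟩
    · rw [← sup_assoc, sup_idem]
    · rw [sup_comm, sup_assoc, sup_idem]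
    · rw [sup_comm, sup_assoc, sup_eq_right.mpr (hd (p i) (hplt i)).le]
  -- maximality
  have hmax : ∀ i j : Fin n,
      UpDownProj (c ↑i) (c (↑i + 1)) (d ↑j) (d (↑j + 1)) → (j : ℕ) ≤ p i := by
    rintro i j ⟨x, y, hxy, ⟨-, hcx, hcy⟩, ⟨-, hdx, hdy⟩⟩
    by_contra h
    push_neg at h
    have h2 : d (p i + 1) ≤ d ↑j := dmono _ _ (by omega) (le_of_lt j.isLt)
    have hcix : c ↑i ≤ x := le_of_sup_eq hcx
    have hdjx : d ↑j ≤ x := le_of_sup_eq hdx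
    have h3 : c (↑i + 1) ≤ x := le_trans (hspec i) (sup_le hcix (le_trans h2 hdjx))
    have hyx : y ≤ x := by
      rw [← hcy]; exact sup_le h3 le_rfl
    exact absurd hyx hxy.lt.not_ge
  -- key for injectivity: d (p i + 1) ≤ c (i+1) ⊔ d (p i)
  have hdkey : ∀ i : Fin n, d (p i + 1) ≤ c (↑i + 1) ⊔ d (p i) := by
    intro i
    have : d (p i + 1) ≤ c (↑i + 1) ⊔ (c ↑i ⊔ d (p i)) := by
      rw [hsquare i]; exact le_sup_right
    calc d (p i + 1) ≤ c (↑i + 1) ⊔ (c ↑i ⊔ d (p i)) := this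
      _ = c (↑i + 1) ⊔ d (p i) := by
          rw [← sup_assoc, sup_eq_left.mpr (cmono ↑i (↑i + 1) (by omega) i.isLt)]
  have hinj : Function.Injective p := by
    have key : ∀ i₁ i₂ : Fin n, (i₁ : ℕ) < i₂ → p i₁ = p i₂ → False := by
      intro i₁ i₂ hlt heq
      have h1 : c ↑(i₁ : ℕ) ⊔ d (p i₁) ≤ c ↑i₂ ⊔ d (p i₁) :=
        sup_le_sup_right (cmono _ _ (le_of_lt hlt) (le_of_lt i₂.isLt)) _
      have h2 : c (↑i₁ + 1) ≤ c ↑i₂ := cmono _ _ (by omega) (le_of_lt i₂.isLt)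
      have h3 : d (p i₂ + 1) ≤ c ↑i₂ ⊔ d (p i₂) := by
        rw [← heq]
        exact le_trans (hdkey i₁) (sup_le_sup_right h2 _)
      have h4 : c (↑i₂ + 1) ≤ c ↑i₂ ⊔ d (p i₂) :=
        le_trans (hspec i₂) (sup_le le_sup_left h3)
      exact hnot i₂ h4
    intro i₁ i₂ heq
    rcases lt_trichotomy (i₁ : ℕ) (i₂ : ℕ) with h | h | h
    · exact absurd heq (fun he => key i₁ i₂ h he)
    · exact Fin.ext h
    · exact absurd heq.symm (fun he => key i₂ i₁ h he)
  let pF : Fin n → Fin n := fun i => ⟨p i, hplt i⟩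
  have hpFinj : Function.Injective pF := by
    intro a b hab
    exact hinj (congrArg Fin.val hab)
  let π : Equiv.Perm (Fin n) := Equiv.ofBijective pF (Finite.injective_iff_bijective.mp hpFinj)
  have hπ : ∀ i, (π i : ℕ) = p i := fun i => rfl
  refine ⟨π, ?_, ?_, ?_⟩
  · intro i
    rw [hπ]
    exact hupdown i
  · intro π' hπ'
    have hle : ∀ i, (π' i : ℕ) ≤ (π i : ℕ) := by
      intro i
      rw [hπ]
      exact hmax i (π' i) (hπ' i)
    have hsum : ∑ i, ((π' i : ℕ)) = ∑ i, ((π i : ℕ)) := by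
      rw [Equiv.sum_comp π' (fun x : Fin n => (x : ℕ)),
        Equiv.sum_comp π (fun x : Fin n => (x : ℕ))]
    apply Equiv.ext
    intro i
    by_contra hne
    have hlt : (π' i : ℕ) < (π i : ℕ) := lt_of_le_of_ne (hle i) (fun h => hne (Fin.ext h))
    have hstrict : ∑ k, ((π' k : ℕ)) < ∑ k, ((π k : ℕ)) :=
      Finset.sum_lt_sum (fun k _ => hle k) ⟨i, Finset.mem_univ i, hlt⟩
    exact absurd hsum (ne_of_lt hstrict)
  · intro i j hij
    have := hmax i j hij
    rw [Fin.le_def, hπ]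
    exact this
end

section
/- Let L be a semimodular join-semilattice with maximal chains 0 = c₀ ⋖ … ⋖ cₙ = 1 and 0 = d₀ ⋖ … ⋖ dₙ = 1. Let l be the largest index with c₁ ≰ d_l. If [c₀,c₁] is up-and-down projective to [d_{j-1},d_j], then j ≤ l + 1. -/
theorem stmt_8 {L : Type*} [SemilatticeSup L] [OrderBot L] [OrderTop L]
    (hsm : ∀ a b c : L, a ⋖ b → a ⊔ c ⩿ b ⊔ c)
    (n : ℕ) (c d : ℕ → L)
    (hc : ∀ i < n, c i ⋖ c (i + 1)) (hd : ∀ j < n, d j ⋖ d (j + 1))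
    (hc0 : c 0 = ⊥) (hcn : c n = ⊤) (hd0 : d 0 = ⊥) (hdn : d n = ⊤)
    (l : ℕ) (hln : l < n) (hl : ¬ c 1 ≤ d l)
    (hlmax : ∀ k, l < k → k ≤ n → c 1 ≤ d k) :
    ∀ j < n, UpDownProj (c 0) (c 1) (d j) (d (j + 1)) → j + 1 ≤ l + 1 := by
  intro j hj hp
  by_contra h
  have hlj : l < j := by omega
  have hc1 : c 1 ≤ d j := hlmax j hlj (by omega)
  obtain ⟨x, y, hxy, ⟨hne, _, hcy⟩, ⟨_, hdx, _⟩⟩ := hp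
  have hdjx : d j ≤ x := le_of_sup_eq hdx
  have : c 1 ⊔ x = x := sup_eq_right.mpr (hc1.trans hdjx)
  exact hne (this ▸ hcy)
end

section
/- Let L be a semimodular join-semilattice, let 0 = d₀ ⋖ d₁ ⋖ … ⋖ dₙ = 1 be a maximal chain, and let c be an atom (0 ⋖ c). Define d'_j = c ∨ d_j. Then the sequence d'₀ ⩿ d'₁ ⩿ … ⩿ d'ₙ (where x ⩿ y means x = y or x ⋖ y) starts at c, ends at 1, and has exactly one repetition: there is exactly one index j with d'_{j-1} = d'_j, namely j = l+1 where l is the largest index with c ≰ d_l. -/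
theorem stmt_9 {L : Type*} [SemilatticeSup L] [OrderBot L] [OrderTop L]
    (hsm : ∀ a b c : L, a ⋖ b → a ⊔ c ⩿ b ⊔ c)
    (n : ℕ) (d : ℕ → L)
    (hd : ∀ j < n, d j ⋖ d (j + 1)) (hd0 : d 0 = ⊥) (hdn : d n = ⊤)
    (c : L) (hc : ⊥ ⋖ c)
    (l : ℕ) (hln : l < n) (hl : ¬ c ≤ d l)
    (hlmax : ∀ k, l < k → k ≤ n → c ≤ d k) :
    (∀ j < n, c ⊔ d j ⩿ c ⊔ d (j + 1)) ∧
    c ⊔ d 0 = c ∧ c ⊔ d n = ⊤ ∧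
    (∀ j < n, (c ⊔ d j = c ⊔ d (j + 1) ↔ j = l)) := by
  have hmono : ∀ i j, i ≤ j → j ≤ n → d i ≤ d j := by
    intro i j hij hjn
    induction j with
    | zero => simp_all
    | succ m ih =>
      rcases Nat.lt_or_ge i (m + 1) with h | h
      · exact le_trans (ih (Nat.lt_succ_iff.mp h) (le_trans (Nat.le_succ m) hjn))
          (hd m (Nat.lt_of_succ_le hjn)).le
      · have : i = m + 1 := le_antisymm hij h
        subst this; rfl
  refine ⟨?_, ?_, ?_, ?_⟩
  · intro j hj
    have := hsm (d j) (d (j + 1)) c (hd j hj)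
    simpa [sup_comm] using this
  · simp [hd0]
  · simp [hdn]
  · intro j hj
    constructor
    · intro heq
      by_contra hne
      rcases lt_or_gt_of_ne hne with hlt | hgt
      · -- j < l : show contradiction
        have hcov : d j ⩿ c ⊔ d j := by
          have := hsm ⊥ c (d j) hc
          simpa using this
        have hne2 : d j ≠ c ⊔ d j := by
          intro h
          exact hl (le_trans (le_trans le_sup_left h.symm.le) (hmono j l hlt.le hln.le))
        have hcov2 : d j ⋖ c ⊔ d j := hcov.covBy_of_ne hne2
        have hle : d (j + 1) ≤ c ⊔ d j := by
          rw [heq]; exact le_sup_right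
        have hjl : d j < d (j + 1) := (hd j hj).lt
        have : d (j + 1) = c ⊔ d j := by
          rcases lt_or_eq_of_le hle with h | h
          · exact absurd h (hcov2.2 hjl)
          · exact h
        have : c ≤ d (j + 1) := le_trans le_sup_left this.symm.le
        exact hl (le_trans this (hmono (j + 1) l hlt hln.le))
      · -- j > l : c ≤ d j and c ≤ d (j+1)
        have h1 : c ≤ d j := hlmax j hgt hj.le
        have h2 : c ≤ d (j + 1) := hlmax (j + 1) (lt_trans hgt (Nat.lt_succ_self j)) hj
        rw [sup_eq_right.mpr h1, sup_eq_right.mpr h2] at heq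
        exact (hd j hj).ne heq
    · rintro rfl
      have h2 : c ≤ d (j + 1) := hlmax (j + 1) (Nat.lt_succ_self j) hj
      have hle : c ⊔ d j ≤ d (j + 1) := sup_le h2 (hd j hj).le
      have hlt : d j < c ⊔ d j := lt_of_le_of_ne le_sup_right
        (fun h => hl (le_trans le_sup_left h.symm.le))
      have : c ⊔ d j = d (j + 1) := by
        rcases lt_or_eq_of_le hle with h | h
        · exact absurd h ((hd j hj).2 hlt)
        · exact h
      rw [this, sup_eq_right.mpr h2]
end

section
/- Let L be a semimodular join-semilattice with least element 0 and c₁ an atom (0 ⋖ c₁). Suppose c_{i-1} ⋖ c_i with c₁ ≤ c_{i-1}, and d_{j-1} ⋖ d_j, and [c_{i-1},c_i] ↗ [x,y] ↗-reverse [d_{j-1},d_j] (i.e., x ≠ y, c_{i-1} ∨ x = x, c_i ∨ x = y, d_{j-1} ∨ x = x, d_j ∨ x = y). Then, setting d'_{j-1} = c₁ ∨ d_{j-1} and d'_j = c₁ ∨ d_j, we have x ∨ d'_{j-1} = x and x ∨ d'_j = y; in particular [c_{i-1},c_i] and [d'_{j-1},d'_j] are up-and-down projective within the interval [c₁, 1]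 whenever d'_{j-1} ≠ d'_j. -/
theorem stmt_11 {L : Type*} [SemilatticeSup L] [OrderBot L] [OrderTop L]
    (hsm : ∀ a b c : L, a ⋖ b → a ⊔ c ⩿ b ⊔ c)
    (c₁ : L) (hc₁ : ⊥ ⋖ c₁)
    (ci1 ci : L) (hci : ci1 ⋖ ci) (hc₁le : c₁ ≤ ci1)
    (dj1 dj : L) (hdj : dj1 ⋖ dj)
    (x y : L) (hxy : x ≠ y)
    (hcx : ci1 ⊔ x = x) (hcy : ci ⊔ x = y)
    (hdx : dj1 ⊔ x = x) (hdy : dj ⊔ x = y) :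
    (x ⊔ (c₁ ⊔ dj1) = x ∧ x ⊔ (c₁ ⊔ dj) = y) ∧
    (c₁ ⊔ dj1 ≠ c₁ ⊔ dj →
      ∃ u v : L, c₁ ≤ u ∧ u ≠ v ∧
        ci1 ⊔ u = u ∧ ci ⊔ u = v ∧
        (c₁ ⊔ dj1) ⊔ u = u ∧ (c₁ ⊔ dj) ⊔ u = v) := by
  have hc₁x : c₁ ≤ x := hc₁le.trans (le_of_sup_eq hcx)
  have hdj1x : dj1 ≤ x := le_of_sup_eq hdx
  have h1 : x ⊔ (c₁ ⊔ dj1) = x := sup_eq_left.mpr (sup_le hc₁x hdj1x)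
  have h2 : x ⊔ (c₁ ⊔ dj) = y := by
    rw [← sup_assoc, sup_eq_left.mpr hc₁x, sup_comm, hdy]
  exact ⟨⟨h1, h2⟩, fun _ => ⟨x, y, hc₁x, hxy, hcx, hcy,
    by rw [sup_comm, h1], by rw [sup_comm, h2]⟩⟩
end

section
/- In a join-semilattice of finite height with least element 0 and greatest element 1 that is semimodular, any two maximal chains from 0 to 1 have the same length (Dedekind's chain condition). -/
private lemma compress_chain {L : Type*} [PartialOrder L] (N : ℕ) (f : ℕ → L)
    (hf : ∀ i < N, f i ⩿ f (i + 1)) :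
    ∃ k ≤ N, ∃ g : ℕ → L, g 0 = f 0 ∧ g k = f N ∧ ∀ i < k, g i ⋖ g (i + 1) := by
  induction N with
  | zero => exact ⟨0, le_refl _, f, rfl, rfl, by omega⟩
  | succ N ih =>
    obtain ⟨k, hk, g, hg0, hgk, hgc⟩ := ih (fun i hi => hf i (by omega))
    rcases (hf N (by omega)).covBy_or_eq with hcov | heq
    · refine ⟨k + 1, by omega, fun i => if i ≤ k then g i else f (N + 1), by simp [hg0],
        by simp, ?_⟩
      intro i hi
      rcases lt_or_eq_of_le (Nat.lt_succ_iff.mp hi) with h | h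
      · simpa [Nat.le_of_lt h, Nat.succ_le_of_lt h] using hgc i h
      · subst h
        simpa [hgk] using hcov
    · exact ⟨k, by omega, g, hg0, by rw [hgk, heq], hgc⟩

private lemma key_chain {L : Type*} [SemilatticeSup L] [OrderTop L]
    (hsm : ∀ a b c : L, a ⋖ b → a ⊔ c ⩿ b ⊔ c) :
    ∀ n : ℕ, ∀ (a : L) (m : ℕ) (c d : ℕ → L),
      (∀ i < n, c i ⋖ c (i + 1)) → (∀ j < m, d j ⋖ d (j + 1)) →
      c 0 = a → c n = ⊤ → d 0 = a → d m = ⊤ → n = m := by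
  intro n
  induction n using Nat.strong_induction_on with
  | _ n IH =>
    intro a m c d hc hd hc0 hcn hd0 hdm
    rcases Nat.eq_zero_or_pos n with hn | hn
    · subst hn
      rcases Nat.eq_zero_or_pos m with hm | hm
      · omega
      · exfalso
        have : d 0 ⋖ d 1 := hd 0 hm
        rw [hd0, ← hc0, hcn] at this
        exact not_top_lt this.lt
    rcases Nat.eq_zero_or_pos m with hm | hm
    · exfalso
      subst hm
      have : c 0 ⋖ c 1 := hc 0 hn
      rw [hc0, ← hd0, hdm] at this
      exact not_top_lt this.lt
    -- n, m ≥ 1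
    have hac : a ⋖ c 1 := hc0 ▸ hc 0 hn
    have had : a ⋖ d 1 := hd0 ▸ hd 0 hm
    by_cases h1 : c 1 = d 1
    · have := IH (n - 1) (by omega) (c 1) (m - 1) (fun i => c (i + 1)) (fun j => d (j + 1))
        (fun i hi => hc (i + 1) (by omega)) (fun j hj => hd (j + 1) (by omega))
        rfl (by show c (n - 1 + 1) = ⊤; rw [Nat.sub_add_cancel hn]; exact hcn) h1.symm
        (by show d (m - 1 + 1) = ⊤; rw [Nat.sub_add_cancel hm]; exact hdm)
      omega
    · set e := c 1 ⊔ d 1 with he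
      have hce : c 1 ⋖ e := by
        have hw : c 1 ⩿ e := by
          have := hsm a (d 1) (c 1) had
          rwa [sup_eq_right.mpr hac.lt.le, sup_comm] at this
        refine hw.covBy_of_lt (lt_of_le_of_ne le_sup_left ?_)
        intro hh
        have hdc : d 1 ≤ c 1 := hh ▸ le_sup_right
        have : d 1 < c 1 := lt_of_le_of_ne hdc (fun hh2 => h1 hh2.symm)
        exact hac.2 had.lt this
      have hde : d 1 ⋖ e := by
        have hw : d 1 ⩿ e := by
          have := hsm a (c 1) (d 1) hac
          rwa [sup_eq_right.mpr had.lt.le] at this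
        refine hw.covBy_of_lt (lt_of_le_of_ne le_sup_right ?_)
        intro hh
        have hcd : c 1 ≤ d 1 := hh ▸ le_sup_left
        have : c 1 < d 1 := lt_of_le_of_ne hcd h1
        exact had.2 hac.lt this
      -- weak chain from e to ⊤ of length n - 1 : f i = e ⊔ c (i + 1)
      obtain ⟨k, hk, g, hg0, hgk, hgc⟩ := compress_chain (n - 1) (fun i => e ⊔ c (i + 1))
        (fun i hi => by
          have := hsm (c (i + 1)) (c (i + 1 + 1)) e (hc (i + 1) (by omega))
          rw [sup_comm (c (i + 1)) e, sup_comm (c (i + 1 + 1)) e] at this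
          exact this)
      have hg0' : g 0 = e := by rw [hg0]; exact sup_eq_left.mpr le_sup_left
      rw [show n - 1 + 1 = n by omega, hcn, sup_eq_right.mpr le_top] at hgk
      -- chain from c 1 : c 1 ⋖ e = g 0 ⋖ ... ⋖ g k = ⊤
      have hstep : ∀ (x : L), x ⋖ g 0 →
          ∀ i < k + 1, (fun i => if i = 0 then x else g (i - 1)) i ⋖
            (fun i => if i = 0 then x else g (i - 1)) (i + 1) := by
        intro x hx i hi
        rcases Nat.eq_zero_or_pos i with h | h
        · subst h; simpa using hx
        · show (if i = 0 then x else g (i - 1)) ⋖ (if i + 1 = 0 then x else g (i + 1 - 1))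
          rw [if_neg (by omega : i ≠ 0), if_neg (by omega : i + 1 ≠ 0)]
          have := hgc (i - 1) (by omega)
          have heq : i - 1 + 1 = i + 1 - 1 := by omega
          rw [heq] at this
          exact this
      have hn1 : n - 1 = k + 1 := by
        refine IH (n - 1) (by omega) (c 1) (k + 1) (fun i => c (i + 1))
          (fun i => if i = 0 then c 1 else g (i - 1))
          (fun i hi => hc (i + 1) (by omega)) (hstep (c 1) (by rw [hg0']; exact hce))
          rfl (by show c (n - 1 + 1) = ⊤; rw [Nat.sub_add_cancel hn]; exact hcn) rfl (by
          show (if k + 1 = 0 then _ else g (k + 1 - 1)) = ⊤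
          rw [if_neg (by omega : k + 1 ≠ 0)]
          simpa using hgk)
      have hm1 : k + 1 = m - 1 := by
        refine IH (k + 1) (by omega) (d 1) (m - 1)
          (fun i => if i = 0 then d 1 else g (i - 1)) (fun j => d (j + 1))
          (hstep (d 1) (by rw [hg0']; exact hde)) (fun j hj => hd (j + 1) (by omega))
          rfl (by
          show (if k + 1 = 0 then _ else g (k + 1 - 1)) = ⊤
          rw [if_neg (by omega : k + 1 ≠ 0)]
          simpa using hgk) rfl (by show d (m - 1 + 1) = ⊤; rw [Nat.sub_add_cancel hm]; exact hdm)
      omega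

theorem stmt_12 {L : Type*} [SemilatticeSup L] [OrderBot L] [OrderTop L]
    (hsm : ∀ a b c : L, a ⋖ b → a ⊔ c ⩿ b ⊔ c)
    (n m : ℕ) (c d : ℕ → L)
    (hc : ∀ i < n, c i ⋖ c (i + 1)) (hd : ∀ j < m, d j ⋖ d (j + 1))
    (hc0 : c 0 = ⊥) (hcn : c n = ⊤) (hd0 : d 0 = ⊥) (hdm : d m = ⊤) :
    n = m :=
  key_chain hsm n ⊥ m c d hc hd hc0 hcn hd0 hdm
end

section
/- Let L be a semimodular join-semilattice with maximal chains 0 = c₀ ⋖ … ⋖ cₙ = 1 and 0 = d₀ ⋖ … ⋖ dₙ = 1, and let l be the largest index with c₁ ≰ d_l. Then [c₀, c₁] ↗ [d_l, d_{l+1}], i.e., d_l ≠ d_{l+1}, c₀ ∨ d_l = d_l, and c₁ ∨ d_l = d_{l+1}. -/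
theorem stmt_17 {L : Type*} [SemilatticeSup L] [OrderBot L] [OrderTop L]
    (hsm : ∀ a b c : L, a ⋖ b → a ⊔ c ⩿ b ⊔ c)
    (n : ℕ) (c d : ℕ → L)
    (hc : ∀ i < n, c i ⋖ c (i + 1)) (hd : ∀ j < n, d j ⋖ d (j + 1))
    (hc0 : c 0 = ⊥) (hcn : c n = ⊤) (hd0 : d 0 = ⊥) (hdn : d n = ⊤)
    (l : ℕ) (hln : l < n) (hl : ¬ c 1 ≤ d l)
    (hlmax : ∀ k, l < k → k ≤ n → c 1 ≤ d k) :
    d l ≠ d (l + 1) ∧ c 0 ⊔ d l = d l ∧ c 1 ⊔ d l = d (l + 1) := by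
  have hdl := hd l hln
  have h01 : c 0 ⋖ c 1 := hc 0 (Nat.lt_of_le_of_lt (Nat.zero_le l) hln)
  refine ⟨hdl.lt.ne, by simp [hc0], ?_⟩
  have hw : d l ⩿ c 1 ⊔ d l := by
    have := hsm (c 0) (c 1) (d l) h01
    simpa [hc0] using this
  have hlt : d l < c 1 ⊔ d l :=
    lt_of_le_of_ne le_sup_right (fun h => hl (h ▸ le_sup_left))
  have hle : c 1 ⊔ d l ≤ d (l + 1) :=
    sup_le (hlmax (l + 1) (Nat.lt_succ_self l) hln) hdl.le
  exact hle.lt_or_eq.resolve_left (hdl.2 hlt)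
end
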